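/- arXiv:2604.23891 — 4 statements merged into one kernel-verified Lean document; each statement's English description precedes it below -/
import Mathlib

section
/- Let μ ≥ 2 be an even integer, W a positive integer, K = μW + 1, and ψ ∈ (0, 2π) a phase with (3/4 − ψ/(2π))·μ not an integer. Then the sum of the positive in-phase channel coefficients over all ports equals W times a consecutive-index sum: Σ_{k ∈ K₁(ψ)} cos(ψ + (2π/μ)(k−1)) = W · Σ_{k = k_low}^{k_up} cos(ψ + (2π/μ)(k−1)), where k_low = ⌈(3/4 − ψ/(2π))μ⌉ + 1 and k_up = ⌊(5/4 − ψ/(2π))μ⌋ + 1. -/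
open Real Finset
open scoped Classical

/-!
With `a = (3/4 - ψ/(2π)) μ`, the channel at port `k` is `sin (2π (k - 1 - a) / μ)`: a sequence of
period `μ` in `k` which, on the period starting at `⌈a⌉ + 1`, is nonnegative for
`k - 1 ∈ [a, a + μ/2]` and nonpositive afterwards. The ports `2, …, μW + 1` form `W` full periods,
so the sum of the positive coefficients is `W` times the sum of the positive part over one period.
Over the period starting at `⌈a⌉ + 1` that is the sum over the window `⌈a⌉ + 1, …, ⌊a + μ/2⌋ + 1`.
-/

namespace Function.Periodic

variable {M : Type*} [AddCancelCommMonoid M] {f : ℤ → M} {p : ℕ}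

theorem sum_Ico_add_period_eq (hf : Periodic f p) (a b : ℤ) :
    ∑ k ∈ Ico a (a + p), f k = ∑ k ∈ Ico b (b + p), f k := by
  have step : Periodic (fun a : ℤ ↦ ∑ k ∈ Ico a (a + p), f k) 1 := fun a ↦ by
    have h₁ := sum_insert (f := f) (s := Ico (a + 1) (a + 1 + p)) (a := a) (by simp)
    have h₂ := sum_insert (f := f) (right_notMem_Ico (a := a) (b := a + p))
    rw [insert_Ico_add_one_left_eq_Ico (by omega), ← hf a] at h₁
    rw [insert_Ico_right_eq_Ico_add_one (by omega), add_right_comm] at h₂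
    exact add_left_cancel (h₁.symm.trans h₂)
  simpa using (step.int_mul a 0).trans (step.int_mul b 0).symm

theorem sum_Ico_mul_period (hf : Periodic f p) (a : ℤ) (W : ℕ) :
    ∑ k ∈ Ico a (a + W * p), f k = W • ∑ k ∈ Ico a (a + p), f k := by
  induction W with
  | zero => simp
  | succ W ih =>
    have hsplit : Ico a (a + (W + 1 : ℕ) * p) =
        Ico a (a + W * p) ∪ Ico (a + W * p) (a + W * p + p) := by
      rw [Ico_union_Ico_eq_Ico (le_add_of_nonneg_right (by positivity)) (by omega)]
      push_cast; ring_nf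
    rw [hsplit, sum_union (Ico_disjoint_Ico_consecutive _ _ _), ih,
      hf.sum_Ico_add_period_eq (a + W * p) a, succ_nsmul]

end Function.Periodic

theorem Finset.sum_filter_pos_eq_sum_of_subset {ι M : Type*} [AddCommMonoid M] [PartialOrder M]
    {s t : Finset ι} {f : ι → M} (hts : t ⊆ s) (hnonneg : ∀ i ∈ t, 0 ≤ f i)
    (hnonpos : ∀ i ∈ s, i ∉ t → f i ≤ 0) :
    ∑ i ∈ s with 0 < f i, f i = ∑ i ∈ t, f i := by
  rw [sum_filter, ← sum_subset hts fun i hi hit ↦ if_neg (hnonpos i hi hit).not_gt]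
  refine sum_congr rfl fun i hi ↦ ?_
  split_ifs with hpos
  · rfl
  · exact (hnonneg i hi).eq_of_not_lt hpos

theorem Nat.image_cast_Icc_eq_image_intCast {R : Type*} [AddGroupWithOne R] [DecidableEq R]
    (m n : ℕ) : (Icc m n).image (Nat.cast : ℕ → R) = (Icc (m : ℤ) n).image (Int.cast : ℤ → R) := by
  ext x
  simp only [mem_image, mem_Icc]
  constructor
  · rintro ⟨k, hk, rfl⟩
    exact ⟨k, by omega, Int.cast_natCast k⟩
  · rintro ⟨k, hk, rfl⟩
    lift k to ℕ using by omega
    exact ⟨k, by omega, (Int.cast_natCast k).symm⟩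

theorem Real.sin_two_pi_div_mul_nonneg {μ s : ℝ} (hμ : 0 < μ) (h₀ : 0 ≤ s) (h₁ : s ≤ μ / 2) :
    0 ≤ sin (2 * π / μ * s) := by
  apply sin_nonneg_of_nonneg_of_le_pi (by positivity)
  calc 2 * π / μ * s ≤ 2 * π / μ * (μ / 2) := by gcongr
    _ = π := by field_simp

theorem Real.sin_two_pi_div_mul_nonpos {μ s : ℝ} (hμ : 0 < μ) (h₀ : μ / 2 ≤ s) (h₁ : s ≤ μ) :
    sin (2 * π / μ * s) ≤ 0 := by
  rw [← sin_sub_two_pi]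
  apply sin_nonpos_of_nonpos_of_neg_pi_le
  · calc 2 * π / μ * s - 2 * π ≤ 2 * π / μ * μ - 2 * π := by gcongr
      _ = 0 := by field_simp; ring
  · calc -π = 2 * π / μ * (μ / 2) - 2 * π := by field_simp; ring
      _ ≤ 2 * π / μ * s - 2 * π := by gcongr

noncomputable def inPhase (μ : ℕ) (ψ x : ℝ) : ℝ := cos (ψ + 2 * π / μ * (x - 1))

namespace inPhase

variable {μ : ℕ} {ψ : ℝ}

theorem periodic (hμ : μ ≠ 0) : Function.Periodic (fun k : ℤ ↦ inPhase μ ψ k) μ := fun k ↦ by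
  have hμ : (μ : ℝ) ≠ 0 := by exact_mod_cast hμ
  simp only [inPhase]
  conv_rhs => rw [← cos_add_two_pi]
  congr 1
  push_cast
  field_simp
  ring

theorem eq_sin (hμ : μ ≠ 0) (x : ℝ) :
    inPhase μ ψ x = sin (2 * π / μ * (x - 1 - (3 / 4 - ψ / (2 * π)) * μ)) := by
  have hμ : (μ : ℝ) ≠ 0 := by exact_mod_cast hμ
  rw [inPhase, ← cos_pi_div_two_sub, ← cos_neg, ← cos_add_two_pi]
  congr 1
  field_simp
  ring

theorem window_subset_period (hμ : μ ≠ 0) :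
    Icc (⌈(3 / 4 - ψ / (2 * π)) * μ⌉ + 1) (⌊(5 / 4 - ψ / (2 * π)) * μ⌋ + 1) ⊆
      Ico (⌈(3 / 4 - ψ / (2 * π)) * μ⌉ + 1) (⌈(3 / 4 - ψ / (2 * π)) * μ⌉ + 1 + μ) := by
  refine Icc_subset_Ico_right ?_
  have hμ : (0 : ℝ) < μ := by positivity
  have hfloor : ⌊(5 / 4 - ψ / (2 * π)) * μ⌋ < ⌈(3 / 4 - ψ / (2 * π)) * μ⌉ + μ := by
    rw [Int.floor_lt]
    push_cast
    linarith [Int.le_ceil ((3 / 4 - ψ / (2 * π)) * μ)]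
  omega

theorem nonneg_of_mem_window (hμ : μ ≠ 0) {k : ℤ}
    (hk : k ∈ Icc (⌈(3 / 4 - ψ / (2 * π)) * μ⌉ + 1) (⌊(5 / 4 - ψ / (2 * π)) * μ⌋ + 1)) :
    0 ≤ inPhase μ ψ k := by
  obtain ⟨hlo, hup⟩ := mem_Icc.mp hk
  have hlo := Int.ceil_le.mp (by omega : ⌈(3 / 4 - ψ / (2 * π)) * μ⌉ ≤ k - 1)
  have hup := Int.le_floor.mp (by omega : k - 1 ≤ ⌊(5 / 4 - ψ / (2 * π)) * μ⌋)
  push_cast at hlo hup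
  rw [eq_sin hμ]
  exact sin_two_pi_div_mul_nonneg (by positivity) (by linarith) (by linarith)

theorem nonpos_of_mem_period_of_notMem_window (hμ : μ ≠ 0) {k : ℤ}
    (hk : k ∈ Ico (⌈(3 / 4 - ψ / (2 * π)) * μ⌉ + 1) (⌈(3 / 4 - ψ / (2 * π)) * μ⌉ + 1 + μ))
    (hk' : k ∉ Icc (⌈(3 / 4 - ψ / (2 * π)) * μ⌉ + 1) (⌊(5 / 4 - ψ / (2 * π)) * μ⌋ + 1)) :
    inPhase μ ψ k ≤ 0 := by
  rw [mem_Icc] at hk'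
  obtain ⟨hlo, hup⟩ := mem_Ico.mp hk
  have hlo := Int.floor_lt.mp (by omega : ⌊(5 / 4 - ψ / (2 * π)) * μ⌋ < k - 1)
  have hup := Int.lt_ceil.mp (by omega : k - 1 - μ < ⌈(3 / 4 - ψ / (2 * π)) * μ⌉)
  push_cast at hlo hup
  rw [eq_sin hμ]
  exact sin_two_pi_div_mul_nonpos (by positivity) (by linarith) (by linarith)

end inPhase

theorem cuma_signal_sum_eq_window_sum_general (μ W : ℕ) (hμ2 : 2 ≤ μ)
    (ψ : ℝ) :
    ∑ k ∈ (Finset.Icc 2 (μ * W + 1)).filter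
        (fun k => 0 < Real.cos (ψ + 2 * π / μ * ((k : ℝ) - 1))),
      Real.cos (ψ + 2 * π / μ * ((k : ℝ) - 1))
      = (W : ℝ) *
        ∑ k ∈ Finset.Icc (⌈(3 / 4 - ψ / (2 * π)) * μ⌉ + 1)
            (⌊(5 / 4 - ψ / (2 * π)) * μ⌋ + 1),
          Real.cos (ψ + 2 * π / μ * ((k : ℝ) - 1)) := by
  have hμ : μ ≠ 0 := by omega
  set start := ⌈(3 / 4 - ψ / (2 * π)) * μ⌉ + 1
  have hposPart : Function.Periodic
      (fun k : ℤ ↦ if 0 < inPhase μ ψ k then inPhase μ ψ k else 0) μ :=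
    (inPhase.periodic hμ).comp fun y ↦ if 0 < y then y else 0
  have hports : Icc ((2 : ℕ) : ℤ) ((μ * W + 1 : ℕ) : ℤ) = Ico 2 (2 + (W : ℤ) * μ) := by
    rw [← Ico_add_one_right_eq_Icc]; push_cast; ring_nf
  -- The statement coerces the `ℕ`-interval of ports to a `Finset ℝ` through the `Finset` monad.
  rw [bind_pure_comp, fmap_def, Nat.image_cast_Icc_eq_image_intCast, filter_image,
    sum_image Int.cast_injective.injOn, hports]
  change ∑ k ∈ Ico (2 : ℤ) (2 + (W : ℤ) * μ) with 0 < inPhase μ ψ (k : ℤ),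
    inPhase μ ψ (k : ℤ) = _
  rw [sum_filter, hposPart.sum_Ico_mul_period, hposPart.sum_Ico_add_period_eq 2 start,
    ← sum_filter, sum_filter_pos_eq_sum_of_subset, nsmul_eq_mul]
  · rfl
  · exact inPhase.window_subset_period hμ
  · exact fun k hk ↦ inPhase.nonneg_of_mem_window hμ hk
  · exact fun k hk hk' ↦ inPhase.nonpos_of_mem_period_of_notMem_window hμ hk hk'

/-- Lemma 1: the sum of the positive in-phase channel coefficients over all ports
equals `W` times a consecutive-index sum. -/
theorem cuma_signal_sum_eq_window_sum (μ W : ℕ) (hμ2 : 2 ≤ μ) (hμe : Even μ) (hW : 1 ≤ W)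
    (ψ : ℝ) (hψ0 : 0 < ψ) (hψ2 : ψ < 2 * π)
    (hni : ∀ n : ℤ, (3 / 4 - ψ / (2 * π)) * μ ≠ (n : ℝ)) :
    ∑ k ∈ (Finset.Icc 2 (μ * W + 1)).filter
        (fun k => 0 < Real.cos (ψ + 2 * π / μ * ((k : ℝ) - 1))),
      Real.cos (ψ + 2 * π / μ * ((k : ℝ) - 1))
      = (W : ℝ) *
        ∑ k ∈ Finset.Icc (⌈(3 / 4 - ψ / (2 * π)) * μ⌉ + 1)
            (⌊(5 / 4 - ψ / (2 * π)) * μ⌋ + 1),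
          Real.cos (ψ + 2 * π / μ * ((k : ℝ) - 1)) :=
  cuma_signal_sum_eq_window_sum_general μ W hμ2 ψ
end

section
/- Let μ ≥ 2 be an even integer, W a positive integer, K = μW + 1, and ψ ∈ (0, 2π) a phase with (3/4 − ψ/(2π))·μ not an integer. Then the number of activated ports equals half of the usable ports: the cardinality of K₁(ψ) = {k ∈ {2, …, K} : cos(ψ + (2π/μ)(k−1)) > 0} is (K−1)/2 = μW/2. -/
open Real Finset
open scoped Classical
open Function

/-!
Writing `μ = 2h`, shifting the port index by `h` advances the phase by `π`, so it flips the sign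
of the in-phase channel; the non-integrality hypothesis says that the channel never vanishes at a
port. Hence among any `2h` consecutive ports exactly `h` are activated, and the `μW` usable ports
form `W` such blocks.
-/

lemma card_filter_Ico_add_two_mul_of_iff_not {Q : ℕ → Prop} [DecidablePred Q] {h : ℕ}
    (hQ : ∀ j, Q (j + h) ↔ ¬ Q j) (a : ℕ) : #{j ∈ Ico a (a + 2 * h) | Q j} = h := by
  calc #{j ∈ Ico a (a + 2 * h) | Q j}
      = #{j ∈ Ico a (a + h) | Q j} + #{j ∈ Ico a (a + h) | Q (j + h)} := by
        simp only [card_filter]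
        rw [sum_Ico_add' (fun i => if Q i then 1 else 0),
          sum_Ico_consecutive _ (by omega) (by omega), two_mul, add_assoc]
    _ = #{j ∈ Ico a (a + h) | Q j} + #{j ∈ Ico a (a + h) | ¬ Q j} := by simp only [hQ]
    _ = h := by rw [card_filter_add_card_filter_not, Nat.card_Ico, Nat.add_sub_cancel_left]

lemma card_filter_Ico_add_two_mul_mul_of_iff_not {Q : ℕ → Prop} [DecidablePred Q] {h : ℕ}
    (hQ : ∀ j, Q (j + h) ↔ ¬ Q j) (a n : ℕ) : #{j ∈ Ico a (a + 2 * h * n) | Q j} = h * n := by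
  induction n with
  | zero => simp
  | succ n ih =>
    rw [card_filter, ← sum_Ico_consecutive _ (by omega : a ≤ a + 2 * h * n) (by nlinarith),
      ← card_filter, ← card_filter, ih, mul_add_one, ← add_assoc,
      card_filter_Ico_add_two_mul_of_iff_not hQ, mul_add_one]

lemma Function.Antiperiodic.pos_add_iff_not_pos {β : Type*} [AddCommGroup β] [LinearOrder β]
    [IsOrderedAddMonoid β] {f : ℕ → β} {h : ℕ} (hf : Antiperiodic f h) (hf0 : ∀ j, f j ≠ 0)
    (j : ℕ) : 0 < f (j + h) ↔ ¬ 0 < f j := by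
  rw [hf j, neg_pos, not_lt, le_iff_lt_or_eq, or_iff_left (hf0 j)]

lemma antiperiodic_cos_port (ψ : ℝ) {h : ℕ} (hh : h ≠ 0) :
    Antiperiodic (fun k : ℕ => cos (ψ + 2 * π / ↑(h + h) * ((k : ℝ) - 1))) h := by
  intro k
  dsimp only
  rw [← cos_add_pi]
  congr 1
  push_cast
  field_simp
  ring

lemma cos_port_ne_zero {ψ : ℝ} {h : ℕ} (hh : h ≠ 0)
    (hni : ∀ n : ℤ, (3 / 4 - ψ / (2 * π)) * ↑(h + h) ≠ (n : ℝ)) (k : ℕ) :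
    cos (ψ + 2 * π / ↑(h + h) * ((k : ℝ) - 1)) ≠ 0 := by
  intro hk
  obtain ⟨m, hm⟩ := cos_eq_zero_iff.mp hk
  -- the zero `(2m + 1)π/2` of `cos` forces `(3/4 - ψ/(2π))μ = (1 - m)h + k - 1`
  apply hni ((1 - m) * h + k - 1)
  push_cast at hm ⊢
  field_simp at hm ⊢
  linarith

theorem cuma_activated_ports_card_general (μ W : ℕ) (hμe : Even μ) (ψ : ℝ)
    (hni : ∀ n : ℤ, (3 / 4 - ψ / (2 * π)) * μ ≠ (n : ℝ)) :
    ((Finset.Icc 2 (μ * W + 1)).filter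
        (fun k => 0 < Real.cos (ψ + 2 * π / μ * ((k : ℝ) - 1)))).card
      = μ * W / 2 := by
  obtain ⟨h, rfl⟩ := hμe
  have hh : h ≠ 0 := by
    rintro rfl
    exact hni 0 (by simp)
  rw [show (h + h) * W = 2 * h * W by ring]
  have hports : Icc 2 (2 * h * W + 1) = Ico 2 (2 + 2 * h * W) := by
    ext
    simp only [mem_Icc, mem_Ico]
    omega
  -- the port set elaborates as the image of `Icc 2 (μW + 1) : Finset ℕ` under the cast to `ℝ`
  simp only [bind_def, pure_def, sup_singleton_apply]
  rw [filter_image, card_image_of_injective _ Nat.cast_injective, hports,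
    card_filter_Ico_add_two_mul_mul_of_iff_not
      ((antiperiodic_cos_port ψ hh).pos_add_iff_not_pos (cos_port_ne_zero hh hni)),
    mul_assoc, Nat.mul_div_cancel_left _ two_pos]

/-- Lemma 3: the number of activated ports equals `(K-1)/2 = μW/2`. -/
theorem cuma_activated_ports_card (μ W : ℕ) (hμ2 : 2 ≤ μ) (hμe : Even μ) (hW : 1 ≤ W)
    (ψ : ℝ) (hψ0 : 0 < ψ) (hψ2 : ψ < 2 * π)
    (hni : ∀ n : ℤ, (3 / 4 - ψ / (2 * π)) * μ ≠ (n : ℝ)) :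
    ((Finset.Icc 2 (μ * W + 1)).filter
        (fun k => 0 < Real.cos (ψ + 2 * π / μ * ((k : ℝ) - 1)))).card
      = μ * W / 2 :=
  cuma_activated_ports_card_general μ W hμe ψ hni
end

section
/- Let μ ≥ 2 be an even integer, ψ ∈ (0, 2π) with t := 3/4 − ψ/(2π) such that tμ is not an integer, and let k_low = ⌈tμ⌉ + 1 and k_up = ⌊(5/4 − ψ/(2π))μ⌋ + 1. Then Σ_{k = k_low}^{k_up} cos(ψ + (2π/μ)(k−1)) = −sin(ψ − π/μ + (2π/μ)⌈tμ⌉) / sin(π/μ). Consequently, for any W ≥ 1 integer, ζ > 0 and V = sin(π/μ)/W, the squared aggregated signal α_I := ζ·[W·Σ_{k = k_low}^{k_up} cos(ψ + (2π/μ)(k−1))]² satisfies α_I = ζ·cos²(−2πt − π/μ + (2π/μ)⌈tμ⌉) / V². -/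
open Real Finset

/-!
The window `[k_low, k_up]` contains exactly `μ / 2` indices: since `tμ ∉ ℤ`, `⌈tμ⌉ = ⌊tμ⌋ + 1`,
and `(5/4 - ψ/(2π))μ = tμ + μ/2`. The summed angles therefore form an arithmetic progression
with step `δ = 2π/μ` covering half a turn, and the telescoping identity
`2 sin(δ/2) cos(θ + jδ) = sin(θ + jδ + δ/2) - sin(θ + jδ - δ/2)` collapses the sum to
`-2 sin(θ - δ/2)`, because `sin(x + π) = -sin x`. Finally `ψ = 3π/2 - 2πt` turns this sine into
the cosine of the power formula.
-/

theorem Int.sum_Icc_add_natCast {M : Type*} [AddCommMonoid M] (f : ℤ → M) (m : ℤ) (N : ℕ) :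
    ∑ k ∈ Icc (m + 1) (m + N), f k = ∑ j ∈ Finset.range N, f (m + 1 + j) := by
  rw [Int.Icc_eq_finset_map, sum_map, show (m + N + 1 - (m + 1)).toNat = N by omega]
  rfl

theorem Int.floor_add_natCast_add_one_eq_ceil_add_natCast {R : Type*} [Ring R] [LinearOrder R]
    [IsOrderedRing R] [FloorRing R] {x : R} (hx : x ∉ Set.range Int.cast) (N : ℕ) :
    ⌊x + N⌋ + 1 = ⌈x⌉ + N := by
  rw [Int.floor_add_natCast, (Int.ceil_eq_floor_add_one_iff_notMem x).mpr hx]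
  ring

theorem Real.sin_pi_div_pos {x : ℝ} (hx : 1 < x) : 0 < sin (π / x) := by
  refine sin_pos_of_pos_of_lt_pi (div_pos pi_pos (one_pos.trans hx)) ?_
  rw [div_lt_iff₀ (one_pos.trans hx)]
  exact lt_mul_of_one_lt_right pi_pos hx

theorem Real.sin_add_three_pi_div_two (x : ℝ) : sin (x + 3 * π / 2) = -cos x := by
  rw [show x + 3 * π / 2 = x + π / 2 + π by ring, sin_add_pi, sin_add_pi_div_two]

theorem sum_range_cos_mul_two_sin (θ δ : ℝ) (N : ℕ) :
    (∑ j ∈ range N, cos (θ + j * δ)) * (2 * sin (δ / 2))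
      = sin (θ + N * δ - δ / 2) - sin (θ - δ / 2) := by
  induction N with
  | zero => simp
  | succ n ih =>
    rw [sum_range_succ, add_mul, ih, show θ + (n + 1 : ℕ) * δ - δ / 2 = θ + n * δ + δ / 2 by
      push_cast; ring, sin_add, sin_sub]
    ring

theorem sum_range_cos_of_mul_eq_pi (θ δ : ℝ) {N : ℕ} (hN : N * δ = π) (hδ : sin (δ / 2) ≠ 0) :
    ∑ j ∈ range N, cos (θ + j * δ) = -sin (θ - δ / 2) / sin (δ / 2) := by
  have h := sum_range_cos_mul_two_sin θ δ N
  rw [add_sub_right_comm, hN, sin_add_pi] at h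
  rw [eq_div_iff hδ]
  linarith

theorem sum_Icc_cos_of_mul_eq_pi (ψ δ : ℝ) (m : ℤ) {N : ℕ} (hN : N * δ = π)
    (hδ : sin (δ / 2) ≠ 0) :
    ∑ k ∈ Icc (m + 1) (m + N), cos (ψ + δ * ((k : ℝ) - 1))
      = -sin (ψ - δ / 2 + δ * m) / sin (δ / 2) := by
  rw [Int.sum_Icc_add_natCast, sub_add_eq_add_sub, ← sum_range_cos_of_mul_eq_pi _ δ hN hδ]
  refine sum_congr rfl fun j _ => ?_
  push_cast
  ring_nf

theorem cuma_signal_power_closed_form_general (μ W : ℕ) (hμ2 : 2 ≤ μ) (hμe : Even μ)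
    (ψ : ℝ)
    (t : ℝ) (ht : t = 3 / 4 - ψ / (2 * π))
    (hni : ∀ n : ℤ, t * μ ≠ (n : ℝ))
    (ζ V : ℝ) (hV : V = Real.sin (π / μ) / W) :
    (∑ k ∈ Finset.Icc (⌈t * μ⌉ + 1) (⌊(5 / 4 - ψ / (2 * π)) * μ⌋ + 1),
        Real.cos (ψ + 2 * π / μ * ((k : ℝ) - 1))
      = -Real.sin (ψ - π / μ + 2 * π / μ * (⌈t * μ⌉ : ℝ)) / Real.sin (π / μ))
    ∧ ζ * ((W : ℝ) *
          ∑ k ∈ Finset.Icc (⌈t * μ⌉ + 1) (⌊(5 / 4 - ψ / (2 * π)) * μ⌋ + 1),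
            Real.cos (ψ + 2 * π / μ * ((k : ℝ) - 1))) ^ 2
      = ζ * Real.cos (-(2 * π * t) - π / μ + 2 * π / μ * (⌈t * μ⌉ : ℝ)) ^ 2 / V ^ 2 := by
  obtain ⟨N, hN⟩ := hμe
  have hμ : (μ : ℝ) = 2 * N := by rw [hN]; push_cast; ring
  have hN0 : (N : ℝ) ≠ 0 := by norm_cast; omega
  have hhalf : 2 * π / μ / 2 = π / μ := by ring
  have hNδ : (N : ℝ) * (2 * π / μ) = π := by rw [hμ]; field_simp
  have hsin : sin (π / μ) ≠ 0 := (sin_pi_div_pos (by exact_mod_cast hμ2)).ne'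
  have hupper : ⌊(5 / 4 - ψ / (2 * π)) * μ⌋ + 1 = ⌈t * μ⌉ + N := by
    rw [show (5 / 4 - ψ / (2 * π)) * μ = t * μ + N by rw [ht, hμ]; ring]
    exact Int.floor_add_natCast_add_one_eq_ceil_add_natCast (fun ⟨n, hn⟩ => hni n hn.symm) N
  have hsum : ∑ k ∈ Finset.Icc (⌈t * μ⌉ + 1) (⌊(5 / 4 - ψ / (2 * π)) * μ⌋ + 1),
      cos (ψ + 2 * π / μ * ((k : ℝ) - 1))
        = -sin (ψ - π / μ + 2 * π / μ * (⌈t * μ⌉ : ℝ)) / sin (π / μ) := by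
    rw [hupper, ← hhalf]
    exact sum_Icc_cos_of_mul_eq_pi ψ _ _ hNδ (hhalf ▸ hsin)
  have hψ : ψ = (3 / 4 - t) * (2 * π) := by rw [ht]; field_simp; ring
  have hphase : -sin (ψ - π / μ + 2 * π / μ * (⌈t * μ⌉ : ℝ))
      = cos (-(2 * π * t) - π / μ + 2 * π / μ * (⌈t * μ⌉ : ℝ)) := by
    rw [show ψ - π / μ + 2 * π / μ * (⌈t * μ⌉ : ℝ)
        = -(2 * π * t) - π / μ + 2 * π / μ * (⌈t * μ⌉ : ℝ) + 3 * π / 2 by rw [hψ]; ring,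
      sin_add_three_pi_div_two, neg_neg]
  refine ⟨hsum, ?_⟩
  rw [hsum, hphase, hV, div_pow, div_div_eq_mul_div]
  ring

/-- Theorem 1: closed form of the aggregated CUMA in-phase channel and of the
received CUMA in-phase signal power. -/
theorem cuma_signal_power_closed_form (μ W : ℕ) (hμ2 : 2 ≤ μ) (hμe : Even μ) (hW : 1 ≤ W)
    (ψ : ℝ) (hψ0 : 0 < ψ) (hψ2 : ψ < 2 * π)
    (t : ℝ) (ht : t = 3 / 4 - ψ / (2 * π))
    (hni : ∀ n : ℤ, t * μ ≠ (n : ℝ))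
    (ζ V : ℝ) (hζ : 0 < ζ) (hV : V = Real.sin (π / μ) / W) :
    (∑ k ∈ Finset.Icc (⌈t * μ⌉ + 1) (⌊(5 / 4 - ψ / (2 * π)) * μ⌋ + 1),
        Real.cos (ψ + 2 * π / μ * ((k : ℝ) - 1))
      = -Real.sin (ψ - π / μ + 2 * π / μ * (⌈t * μ⌉ : ℝ)) / Real.sin (π / μ))
    ∧ ζ * ((W : ℝ) *
          ∑ k ∈ Finset.Icc (⌈t * μ⌉ + 1) (⌊(5 / 4 - ψ / (2 * π)) * μ⌋ + 1),
            Real.cos (ψ + 2 * π / μ * ((k : ℝ) - 1))) ^ 2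
      = ζ * Real.cos (-(2 * π * t) - π / μ + 2 * π / μ * (⌈t * μ⌉ : ℝ)) ^ 2 / V ^ 2 :=
  cuma_signal_power_closed_form_general μ W hμ2 hμe ψ t ht hni ζ V hV
end

section
/- Let μ be a positive integer. The pushforward of the uniform probability distribution on the interval (−1/4, 3/4) under the map t ↦ −2πt − π/μ + (2π/μ)⌈tμ⌉ is the uniform probability distribution on the interval (−π/μ, π/μ). -/
open Real MeasureTheory

/-- The uniform probability distribution on the open interval `(a, b)`:
normalized Lebesgue measure restricted to `(a, b)`. -/
noncomputable def uniformIoo (a b : ℝ) : Measure ℝ :=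
  (volume (Set.Ioo a b))⁻¹ • volume.restrict (Set.Ioo a b)

section CumaAux

open Set

/-- The CUMA phase map. -/
noncomputable def cumaF (μ : ℕ) (t : ℝ) : ℝ :=
  -(2 * π * t) - π / μ + 2 * π / μ * (⌈t * μ⌉ : ℝ)

lemma cumaF_measurable (μ : ℕ) : Measurable (cumaF μ) := by
  have h1 : Measurable fun t : ℝ => ((⌈t * μ⌉ : ℤ) : ℝ) :=
    measurable_from_top.comp ((measurable_mul_const _).ceil)
  unfold cumaF
  exact ((measurable_const.mul measurable_id).neg.sub measurable_const).add
    (measurable_const.mul h1)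

lemma cumaF_periodic (μ : ℕ) (hμ : 1 ≤ μ) : Function.Periodic (cumaF μ) 1 := by
  intro t
  have hμ' : (μ:ℝ) ≠ 0 := Nat.cast_ne_zero.mpr (by omega)
  unfold cumaF
  have h : (t + 1) * μ = t * μ + (μ:ℤ) := by push_cast; ring
  rw [h, Int.ceil_add_intCast]
  push_cast
  field_simp
  ring

lemma map_restrict_period (g : ℝ → ℝ) (hg : Measurable g) (hp : Function.Periodic g 1)
    (a b : ℝ) :
    Measure.map g (volume.restrict (Ioc a (a + 1))) =
      Measure.map g (volume.restrict (Ioc b (b + 1))) := by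
  haveI : Fact ((0:ℝ) < 1) := ⟨one_pos⟩
  set e : AddCircle (1:ℝ) → ℝ :=
    fun x => ((AddCircle.measurableEquivIoc 1 0 x : Ioc (0:ℝ) (0+1)) : ℝ) with he_def
  have he : Measurable e :=
    measurable_subtype_coe.comp (AddCircle.measurableEquivIoc 1 0).measurable
  have key : g = (fun x => g (e x)) ∘ (fun t : ℝ => (t : AddCircle (1:ℝ))) := by
    funext t
    show g t = g (e ((t : AddCircle (1:ℝ))))
    have h1 : e ((t : AddCircle (1:ℝ))) = toIocMod one_pos 0 t := by
      simp only [he_def, AddCircle.measurableEquivIoc, MeasurableEquiv.coe_mk,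
        AddCircle.equivIoc, QuotientAddGroup.equivIocMod_coe]
    have h2 : toIocMod one_pos 0 t = t - (toIocDiv one_pos 0 t : ℝ) * 1 := by
      rw [toIocMod]; push_cast [zsmul_eq_mul]; ring
    rw [h1, h2, hp.sub_int_mul_eq]
  have step : ∀ c : ℝ, Measure.map g (volume.restrict (Ioc c (c + 1))) =
      Measure.map (fun x => g (e x)) (volume : Measure (AddCircle (1:ℝ))) := by
    intro c
    conv_lhs => rw [key]
    rw [show ((fun x => g (e x)) ∘ fun t : ℝ => (t : AddCircle (1:ℝ))) =
        ((g ∘ e) ∘ fun t : ℝ => (t : AddCircle (1:ℝ))) from rfl,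
      ← Measure.map_map (hg.comp he) AddCircle.measurable_mk',
      (AddCircle.measurePreserving_mk 1 c).map_eq]
    rfl
  rw [step a, step b]

lemma map_affine_volume (c : ℝ) :
    Measure.map (fun x : ℝ => c + -(2 * π) * x) volume =
      (ENNReal.ofReal (2 * π))⁻¹ • volume := by
  have h2π : (0:ℝ) < 2 * π := by positivity
  have h1 : Measure.map (fun x : ℝ => -(2 * π) * x) volume
      = ENNReal.ofReal |(-(2 * π))⁻¹| • volume :=
    Real.map_volume_mul_left (by nlinarith)
  have hcomp : (fun x : ℝ => c + -(2 * π) * x) =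
      (fun x : ℝ => c + x) ∘ fun x : ℝ => -(2 * π) * x := rfl
  rw [hcomp, ← Measure.map_map (measurable_const_add c) (measurable_const_mul _), h1,
    Measure.map_smul, map_add_left_eq_self]
  congr 1
  rw [abs_inv, abs_neg, abs_of_pos h2π, ENNReal.ofReal_inv_of_pos h2π]

lemma map_piece (μ : ℕ) (hμ : 1 ≤ μ) (k : ℕ) (hk : k < μ) :
    Measure.map (cumaF μ) (volume.restrict (Ioc ((k:ℝ)/μ) (((k:ℝ)+1)/μ))) =
      (ENNReal.ofReal (2 * π))⁻¹ • volume.restrict (Ico (-(π/μ)) (π/μ)) := by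
  have hμ0 : (0:ℝ) < (μ:ℝ) := by exact_mod_cast (by omega : 0 < μ)
  have hπ : (0:ℝ) < π := pi_pos
  set g : ℝ → ℝ := fun x => (2*(k:ℝ)+1) * π / μ + -(2*π) * x with hg_def
  have hgm : Measurable g := (measurable_const_mul _).const_add _
  have hfg : cumaF μ =ᵐ[volume.restrict (Ioc ((k:ℝ)/μ) (((k:ℝ)+1)/μ))] g := by
    refine (ae_restrict_iff' measurableSet_Ioc).mpr (ae_of_all _ fun t ht => ?_)
    obtain ⟨ht1, ht2⟩ := ht
    have hceil : ⌈t * μ⌉ = (k:ℤ) + 1 := by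
      rw [Int.ceil_eq_iff]
      constructor
      · push_cast
        have := (div_lt_iff₀ hμ0).mp ht1
        linarith
      · push_cast
        have := (le_div_iff₀ hμ0).mp ht2
        linarith
    unfold cumaF
    rw [hceil, hg_def]
    push_cast
    field_simp
    ring
  have hgx : ∀ x : ℝ, (2*(k:ℝ)+1) * π / ↑μ + -(2*π) * x
      = ((2*(k:ℝ)+1)*π - 2*π*(x*μ))/μ := by
    intro x; field_simp; ring
  have hpre : g ⁻¹' (Ico (-(π/μ)) (π/μ)) = Ioc ((k:ℝ)/μ) (((k:ℝ)+1)/μ) := by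
    ext x
    simp only [mem_preimage, mem_Ico, mem_Ioc, hg_def]
    rw [hgx x, ← neg_div, div_le_div_iff_of_pos_right hμ0, div_lt_div_iff_of_pos_right hμ0,
      div_lt_iff₀ hμ0, le_div_iff₀ hμ0]
    constructor
    · rintro ⟨h1, h2⟩
      constructor <;> nlinarith
    · rintro ⟨h1, h2⟩
      constructor <;> nlinarith
  rw [Measure.map_congr hfg, ← hpre, ← Measure.restrict_map hgm measurableSet_Ico,
    hg_def, map_affine_volume, Measure.restrict_smul]

lemma union_pieces (μ : ℕ) (hμ : 1 ≤ μ) :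
    (⋃ k : ℕ, if k < μ then Ioc ((k:ℝ)/μ) (((k:ℝ)+1)/μ) else (∅:Set ℝ)) = Ioc 0 1 := by
  have hμ0 : (0:ℝ) < (μ:ℝ) := by exact_mod_cast (by omega : 0 < μ)
  ext x
  simp only [mem_iUnion, mem_Ioc]
  constructor
  · rintro ⟨k, hk⟩
    by_cases h : k < μ
    · rw [if_pos h] at hk
      obtain ⟨h1, h2⟩ := hk
      have hk' : ((k:ℝ)+1) ≤ (μ:ℝ) := by exact_mod_cast (by omega : k + 1 ≤ μ)
      have h0 : (0:ℝ) ≤ (k:ℝ)/μ := by positivity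
      have hle1 : ((k:ℝ)+1)/μ ≤ 1 := by rw [div_le_one hμ0]; exact hk'
      exact ⟨by linarith, by linarith⟩
    · rw [if_neg h] at hk
      exact absurd hk (notMem_empty x)
  · rintro ⟨h1, h2⟩
    set m := ⌈x * μ⌉ with hm
    have hm1 : 0 < m := Int.ceil_pos.mpr (mul_pos h1 hμ0)
    have hmμ : m ≤ (μ:ℤ) := by
      apply Int.ceil_le.mpr
      push_cast
      nlinarith
    refine ⟨m.toNat - 1, ?_⟩
    have hlt : m.toNat - 1 < μ := by omega
    rw [if_pos hlt]
    have hcast : ((m.toNat - 1 : ℕ) : ℝ) = (m : ℝ) - 1 := by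
      have h1' : (1:ℕ) ≤ m.toNat := by omega
      have h2' : ((m.toNat : ℤ) : ℝ) = (m : ℝ) := by rw [Int.toNat_of_nonneg hm1.le]
      push_cast [h1'] at h2' ⊢
      linarith
    rw [hcast]
    constructor
    · rw [div_lt_iff₀ hμ0]
      have := Int.ceil_lt_add_one (x * μ)
      rw [← hm] at this
      linarith
    · rw [le_div_iff₀ hμ0]
      have := Int.le_ceil (x * μ)
      rw [← hm] at this
      linarith

lemma restrict_sum_pieces (μ : ℕ) (hμ : 1 ≤ μ) :
    volume.restrict (Ioc (0:ℝ) 1) = Measure.sum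
      (fun k : ℕ => volume.restrict
        (if k < μ then Ioc ((k:ℝ)/μ) (((k:ℝ)+1)/μ) else (∅:Set ℝ))) := by
  have hμ0 : (0:ℝ) < (μ:ℝ) := by exact_mod_cast (by omega : 0 < μ)
  rw [← union_pieces μ hμ]
  apply Measure.restrict_iUnion
  · intro i j hij
    simp only [Function.onFun]
    split_ifs with hi hj hj
    · apply Set.Ioc_disjoint_Ioc.mpr
      rcases hij.lt_or_gt with h | h
      · have hij' : ((i:ℝ)+1) ≤ (j:ℝ) := by exact_mod_cast (by omega : i+1 ≤ j)
        calc min (((i:ℝ)+1)/μ) (((j:ℝ)+1)/μ) ≤ ((i:ℝ)+1)/μ := min_le_left _ _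
          _ ≤ (j:ℝ)/μ := (div_le_div_iff_of_pos_right hμ0).mpr hij'
          _ ≤ max ((i:ℝ)/μ) ((j:ℝ)/μ) := le_max_right _ _
      · have hij' : ((j:ℝ)+1) ≤ (i:ℝ) := by exact_mod_cast (by omega : j+1 ≤ i)
        calc min (((i:ℝ)+1)/μ) (((j:ℝ)+1)/μ) ≤ ((j:ℝ)+1)/μ := min_le_right _ _
          _ ≤ (i:ℝ)/μ := (div_le_div_iff_of_pos_right hμ0).mpr hij'
          _ ≤ max ((i:ℝ)/μ) ((j:ℝ)/μ) := le_max_left _ _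
    · exact Set.disjoint_empty _
    · exact Set.empty_disjoint _
    · exact Set.empty_disjoint _
  · intro k
    split_ifs
    · exact measurableSet_Ioc
    · exact MeasurableSet.empty

lemma map_Ioc01 (μ : ℕ) (hμ : 1 ≤ μ) :
    Measure.map (cumaF μ) (volume.restrict (Ioc (0:ℝ) 1)) =
      ((μ:ENNReal) * (ENNReal.ofReal (2 * π))⁻¹) •
        volume.restrict (Ico (-(π/(μ:ℝ))) (π/μ)) := by
  rw [restrict_sum_pieces μ hμ, Measure.map_sum (cumaF_measurable μ).aemeasurable]
  have hterm : ∀ k : ℕ, Measure.map (cumaF μ)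
      (volume.restrict (if k < μ then Ioc ((k:ℝ)/μ) (((k:ℝ)+1)/μ) else (∅:Set ℝ)))
      = (if k < μ then (1:ENNReal) else 0) •
        ((ENNReal.ofReal (2 * π))⁻¹ • volume.restrict (Ico (-(π/(μ:ℝ))) (π/μ))) := by
    intro k
    split_ifs with h
    · rw [one_smul]; exact map_piece μ hμ k h
    · simp
  simp_rw [hterm]
  ext s hs
  rw [Measure.sum_apply _ hs]
  simp only [Measure.smul_apply, smul_eq_mul]
  rw [ENNReal.tsum_mul_right, mul_assoc]
  congr 1
  rw [tsum_eq_sum (s := Finset.range μ)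
    (by intro b hb; rw [if_neg]; simpa using fun h => hb (Finset.mem_range.mpr h))]
  rw [Finset.sum_congr rfl (fun b hb => if_pos (Finset.mem_range.mp hb)),
    Finset.sum_const, Finset.card_range, nsmul_eq_mul, mul_one]

end CumaAux

/-- Appendix D lemma: the pushforward of the uniform distribution on `(-1/4, 3/4)`
under `t ↦ -2πt - π/μ + (2π/μ)⌈tμ⌉` is the uniform distribution on `(-π/μ, π/μ)`. -/
theorem cuma_phase_pushforward_uniform (μ : ℕ) (hμ : 1 ≤ μ) :
    Measure.map
      (fun t : ℝ => -(2 * π * t) - π / μ + 2 * π / μ * (⌈t * μ⌉ : ℝ))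
      (uniformIoo (-(1 / 4)) (3 / 4))
    = uniformIoo (-(π / μ)) (π / μ) := by
  have hμ0 : (0:ℝ) < (μ:ℝ) := by exact_mod_cast (by omega : 0 < μ)
  have h2π : (0:ℝ) < 2 * π := by positivity
  have hπμ : -(π/(μ:ℝ)) < π/μ := by
    have : (0:ℝ) < π/μ := by positivity
    linarith
  have hL : uniformIoo (-(1/4)) (3/4) = volume.restrict (Set.Ioo (-(1/4)) (3/4)) := by
    unfold uniformIoo
    rw [Real.volume_Ioo]
    norm_num
  rw [show (fun t : ℝ => -(2 * π * t) - π / μ + 2 * π / μ * (⌈t * μ⌉ : ℝ)) = cumaF μ from rfl,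
    hL, Measure.restrict_congr_set Ioo_ae_eq_Ioc,
    show (3/4 : ℝ) = -(1/4) + 1 by norm_num,
    map_restrict_period (cumaF μ) (cumaF_measurable μ) (cumaF_periodic μ hμ) (-(1/4)) 0,
    show (0:ℝ) + 1 = 1 by norm_num, map_Ioc01 μ hμ]
  unfold uniformIoo
  rw [← Measure.restrict_congr_set Ioo_ae_eq_Ico, Real.volume_Ioo]
  congr 1
  rw [show π/(μ:ℝ) - -(π/μ) = (2*π)/μ by ring,
    ENNReal.ofReal_div_of_pos hμ0, ENNReal.ofReal_natCast,
    ENNReal.inv_div (Or.inl (ENNReal.natCast_ne_top μ))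
      (Or.inl (by exact_mod_cast (by omega : μ ≠ 0))),
    div_eq_mul_inv]
end
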